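/- arXiv:1609.00909 — 2 statements merged into one kernel-verified Lean document; each statement's English description precedes it below -/
import Mathlib

section
/- Fix d ≥ 2. For any integer n ≥ 1 and any finite set W ⊆ ℤ^d, there exists a family 𝒜 of approximations, each of size at most 3|W|, with |𝒜| ≤ 4^{|W|/d}, such that every finite regular odd set S with |∂S| = n that is separated by W is approximated by some element of 𝒜. -/
/-- The nearest-neighbor lattice graph on `ℤ^d`: two vertices are adjacent
iff they differ by one in exactly one coordinate (equivalently, ℓ¹-distance 1). -/
def ZGraph (d : ℕ) : SimpleGraph (Fin d → ℤ) where
  Adj u v := ∑ i, (u i - v i).natAbs = 1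
  symm := by
    constructor
    intro u v h
    have e : ∀ i, (v i - u i).natAbs = (u i - v i).natAbs := fun i => by
      rw [← Int.natAbs_neg, neg_sub]
    simpa only [e] using h
  loopless := by
    constructor
    intro u h
    simp at h

/-- A vertex is odd if its coordinate sum is odd. -/
def OddVert {d : ℕ} (v : Fin d → ℤ) : Prop := Odd (∑ i, v i)

/-- A vertex is even if its coordinate sum is even. -/
def EvenVert {d : ℕ} (v : Fin d → ℤ) : Prop := Even (∑ i, v i)

/-- Internal vertex-boundary of `U`. -/
def intBdry (d : ℕ) (U : Set (Fin d → ℤ)) : Set (Fin d → ℤ) :=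
  {u ∈ U | ∃ v, (ZGraph d).Adj u v ∧ v ∉ U}

/-- External vertex-boundary of `U`. -/
def extBdry (d : ℕ) (U : Set (Fin d → ℤ)) : Set (Fin d → ℤ) :=
  {v | v ∉ U ∧ ∃ u ∈ U, (ZGraph d).Adj u v}

/-- A set is odd if its internal vertex-boundary consists of odd vertices. -/
def IsOddSet (d : ℕ) (U : Set (Fin d → ℤ)) : Prop := ∀ u ∈ intBdry d U, OddVert u

/-- A set is even if its internal vertex-boundary consists of even vertices. -/
def IsEvenSet (d : ℕ) (U : Set (Fin d → ℤ)) : Prop := ∀ u ∈ intBdry d U, EvenVert u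

/-- The edge-boundary of `U`: edges with exactly one endpoint in `U`. -/
def edgeBdry (d : ℕ) (U : Set (Fin d → ℤ)) : Set (Sym2 (Fin d → ℤ)) :=
  {e | ∃ u v, (ZGraph d).Adj u v ∧ u ∈ U ∧ v ∉ U ∧ e = s(u, v)}

/-- A cutset: a non-empty finite subset of `ℤ^d` which is connected and co-connected. -/
def IsCutset (d : ℕ) (U : Set (Fin d → ℤ)) : Prop :=
  U.Finite ∧ U.Nonempty ∧ ((ZGraph d).induce U).Connected ∧ ((ZGraph d).induce Uᶜ).Connected

/-- `OCC d n`: the number of odd cutsets in `ℤ^d` containing the origin with `n` boundary edges. -/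
noncomputable def OCC (d n : ℕ) : ℕ :=
  {S : Set (Fin d → ℤ) | IsCutset d S ∧ IsOddSet d S ∧ (0 : Fin d → ℤ) ∈ S ∧
    (edgeBdry d S).ncard = n}.ncard

/-- A set is regular if both it and its complement have no isolated vertices. -/
def IsRegularSet (d : ℕ) (U : Set (Fin d → ℤ)) : Prop :=
  (∀ u ∈ U, ∃ v ∈ U, (ZGraph d).Adj u v) ∧ (∀ u ∉ U, ∃ v ∉ U, (ZGraph d).Adj u v)

/-- The graph `(ℤ^d)^{⊗r}` where two vertices are adjacent iff their lattice distance is ≤ r. -/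
def PowGraph (d r : ℕ) : SimpleGraph (Fin d → ℤ) where
  Adj u v := u ≠ v ∧ (ZGraph d).dist u v ≤ r
  symm := by
    constructor
    rintro u v ⟨h1, h2⟩
    exact ⟨h1.symm, by rwa [SimpleGraph.dist_comm]⟩
  loopless := by constructor; rintro u ⟨h, -⟩; exact h rfl

/-- An `r`-cutset: a finite regular set, connected and co-connected in `(ℤ^d)^{⊗r}`. -/
def IsRCutset (d r : ℕ) (U : Set (Fin d → ℤ)) : Prop :=
  U.Finite ∧ IsRegularSet d U ∧
    ((PowGraph d r).induce U).Connected ∧ ((PowGraph d r).induce Uᶜ).Connected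

/-- An approximation: a pair of disjoint subsets of `ℤ^d`, the first odd, the second even. -/
structure Approx (d : ℕ) where
  inn : Set (Fin d → ℤ)
  out : Set (Fin d → ℤ)
  disj : Disjoint inn out
  inn_odd : IsOddSet d inn
  out_even : IsEvenSet d out

/-- The set of unknown vertices of an approximation. -/
def Approx.star {d : ℕ} (A : Approx d) : Set (Fin d → ℤ) := (A.inn ∪ A.out)ᶜ

/-- `A` approximates `S` if `A.inn ⊆ S` and `A.out ⊆ Sᶜ`. -/
def Approximates {d : ℕ} (A : Approx d) (S : Set (Fin d → ℤ)) : Prop :=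
  A.inn ⊆ S ∧ A.out ⊆ Sᶜ

/-- A `t`-approximation: the subgraph induced on the unknown vertices has
maximum degree at most `t` and no isolated vertices. -/
def IsTApprox (d t : ℕ) (A : Approx d) : Prop :=
  (∀ v ∈ A.star, ({u ∈ A.star | (ZGraph d).Adj v u}).ncard ≤ t) ∧
  (∀ v ∈ A.star, ∃ u ∈ A.star, (ZGraph d).Adj v u)

/-- The neighborhood `N(U)` of a set. -/
def nbrSet (d : ℕ) (U : Set (Fin d → ℤ)) : Set (Fin d → ℤ) :=
  {v | ∃ u ∈ U, (ZGraph d).Adj v u}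

/-- `U⁺ = U ∪ N(U)`. -/
def plus (d : ℕ) (U : Set (Fin d → ℤ)) : Set (Fin d → ℤ) := U ∪ nbrSet d U

/-- `W` separates `S` if every boundary edge of `S` has an endpoint in `W`. -/
def Separates (d : ℕ) (W S : Set (Fin d → ℤ)) : Prop :=
  ∀ a b : Fin d → ℤ, s(a, b) ∈ edgeBdry d S → a ∈ W ∨ b ∈ W


/-!
Delete the edges touching `W`. Away from `W`, a set `S` separated by `W` is a union of connected
components of what remains, and a finite `S` contains only finite ones. Every boundary edge of a
finite component ends in `W`, so these components have disjoint boundaries of total size at most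
`2d|W|`. By the edge-isoperimetric inequality a component `C` with `|C| < 2^d` has at least `d|C|`
boundary edges, and (projecting onto coordinate hyperplanes) one with `|C| ≥ 2^d` at least `d²`.
Hence the small components have at most `2|W|` vertices in all and there are at most `2|W|/d` big
ones. An approximation is fixed by the set of big components inside `S`: they go to `A•`, the other
big and the infinite components to `A∘`, and the vertices of `W` adjacent to them are decided by
parity. Only `W` and the small components remain unknown.
-/

open Finset

section Lattice

variable {d : ℕ}

theorem pi_single_units_injective :
    Function.Injective fun q : Fin d × ℤˣ => (Pi.single q.1 (q.2 : ℤ) : Fin d → ℤ) := by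
  rintro ⟨i, s⟩ ⟨j, t⟩ h
  have hi := congrFun h i
  by_cases hij : i = j
  · subst hij
    simp only [Pi.single_eq_same, Units.val_inj] at hi
    rw [hi]
  · simp [Ne.symm hij] at hi

theorem zgraph_adj_iff {u v : Fin d → ℤ} :
    (ZGraph d).Adj u v ↔ ∃ i, ∃ s : ℤˣ, v = u + Pi.single i (s : ℤ) := by
  change ∑ j, (u j - v j).natAbs = 1 ↔ _
  constructor
  · intro h
    obtain ⟨i, -, hi⟩ := exists_ne_zero_of_sum_ne_zero (h ▸ one_ne_zero)
    have hrest := add_sum_erase univ (fun j => (u j - v j).natAbs) (mem_univ i)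
    have hle : (u i - v i).natAbs ≤ 1 :=
      h ▸ single_le_sum (f := fun j => (u j - v j).natAbs) (fun j _ => Nat.zero_le _) (mem_univ i)
    have hone : (v i - u i).natAbs = 1 := by rw [← Int.natAbs_neg, neg_sub]; omega
    have hzero := sum_eq_zero_iff.1 (show ∑ j ∈ univ.erase i, (u j - v j).natAbs = 0 by omega)
    refine ⟨i, (Int.isUnit_iff_natAbs_eq.2 hone).unit, funext fun j => ?_⟩
    by_cases hji : j = i
    · subst hji; simp
    · have := hzero j (mem_erase.2 ⟨hji, mem_univ j⟩)
      simp [hji]; omega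
  · rintro ⟨i, s, rfl⟩
    rcases Int.units_eq_one_or s with rfl | rfl <;> simp [Pi.single_apply, apply_ite]

theorem oddVert_iff_not_oddVert_of_adj {u v : Fin d → ℤ} (h : (ZGraph d).Adj u v) :
    OddVert v ↔ ¬ OddVert u := by
  obtain ⟨i, s, rfl⟩ := zgraph_adj_iff.1 h
  rcases Int.units_eq_one_or s with rfl | rfl <;>
    simp [OddVert, sum_add_distrib, Int.odd_add, Int.not_odd_iff_even]

theorem evenVert_iff_oddVert_of_adj {u v : Fin d → ℤ} (h : (ZGraph d).Adj u v) :
    EvenVert v ↔ OddVert u := by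
  rw [EvenVert, ← Int.not_odd_iff_even, ← OddVert, oddVert_iff_not_oddVert_of_adj h, not_not]

end Lattice

section Arcs

variable {d : ℕ}

def arcs (C : Finset (Fin d → ℤ)) : Finset ((Fin d → ℤ) × (Fin d → ℤ)) :=
  (C ×ˢ (univ : Finset (Fin d × ℤˣ))).image fun q => (q.1, q.1 + Pi.single q.2.1 (q.2.2 : ℤ))

def innerArcs (C : Finset (Fin d → ℤ)) : Finset ((Fin d → ℤ) × (Fin d → ℤ)) :=
  {p ∈ arcs C | p.2 ∈ C}

def outerArcs (C : Finset (Fin d → ℤ)) : Finset ((Fin d → ℤ) × (Fin d → ℤ)) :=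
  {p ∈ arcs C | p.2 ∉ C}

variable {C : Finset (Fin d → ℤ)} {p : (Fin d → ℤ) × (Fin d → ℤ)}

theorem mem_arcs : p ∈ arcs C ↔ p.1 ∈ C ∧ (ZGraph d).Adj p.1 p.2 := by
  simp only [arcs, mem_image, mem_product, mem_univ, and_true, zgraph_adj_iff]
  constructor
  · rintro ⟨⟨u, i, s⟩, hu, rfl⟩
    exact ⟨hu, i, s, rfl⟩
  · rintro ⟨hu, i, s, hv⟩
    exact ⟨⟨p.1, i, s⟩, hu, by rw [← hv]⟩

theorem mem_innerArcs : p ∈ innerArcs C ↔ p.1 ∈ C ∧ p.2 ∈ C ∧ (ZGraph d).Adj p.1 p.2 := by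
  rw [innerArcs, mem_filter, mem_arcs]; tauto

theorem mem_outerArcs : p ∈ outerArcs C ↔ p.1 ∈ C ∧ p.2 ∉ C ∧ (ZGraph d).Adj p.1 p.2 := by
  rw [outerArcs, mem_filter, mem_arcs]; tauto

theorem card_arcs (C : Finset (Fin d → ℤ)) : #(arcs C) = 2 * d * #C := by
  rw [arcs, card_image_of_injective, card_product, card_univ, Fintype.card_prod,
    Fintype.card_fin, Fintype.card_units_int]
  · ring
  rintro ⟨u, q⟩ ⟨u', q'⟩ h
  simp only [Prod.mk.injEq] at h
  obtain ⟨rfl, h⟩ := h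
  rw [pi_single_units_injective (add_left_cancel h)]

theorem card_innerArcs_add_card_outerArcs (C : Finset (Fin d → ℤ)) :
    #(innerArcs C) + #(outerArcs C) = 2 * d * #C := by
  rw [innerArcs, outerArcs, card_filter_add_card_filter_not, card_arcs]

end Arcs

section SmallSets

open Real

theorem mul_log_two_le_log_one_add {x : ℝ} (h0 : 0 ≤ x) (h1 : x ≤ 1) :
    x * log 2 ≤ log (1 + x) := by
  have h := rpow_one_add_le_one_add_mul_self (s := 1) (by norm_num) h0 h1
  rw [one_add_one_eq_two, mul_one] at h
  rw [← log_rpow two_pos]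
  exact log_le_log (by positivity) h

theorem mul_log_add_mul_log_add_le {a b : ℝ} (ha : 0 < a) (hb : 0 < b) :
    a * log a + b * log b + 2 * min a b * log 2 ≤ (a + b) * log (a + b) := by
  wlog hab : a ≤ b generalizing a b
  · have := this hb ha (le_of_not_ge hab)
    rwa [min_comm, add_comm b a, add_comm (b * log b)] at this
  rw [min_eq_left hab]
  have hleft : a * log 2 + a * log a ≤ a * log (a + b) := by
    rw [← mul_add, ← log_mul two_pos.ne' ha.ne']
    exact mul_le_mul_of_nonneg_left (log_le_log (by positivity) (by linarith)) ha.le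
  have hright : a * log 2 + b * log b ≤ b * log (a + b) := by
    have hlog := mul_log_two_le_log_one_add (div_nonneg ha.le hb.le) ((div_le_one hb).2 hab)
    have hsplit : log (a + b) = log b + log (1 + a / b) := by
      rw [← log_mul hb.ne' (by positivity)]
      congr 1
      field_simp
      ring
    calc a * log 2 + b * log b = b * (a / b * log 2) + b * log b := by field_simp
      _ ≤ b * log (1 + a / b) + b * log b := by gcongr
      _ = b * log (a + b) := by rw [hsplit]; ring
  linarith

variable {d : ℕ}

theorem eq_add_single_of_adj_of_lt {u v : Fin d → ℤ} {i : Fin d} (h : (ZGraph d).Adj u v)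
    (hlt : u i < v i) : v = u + Pi.single i 1 := by
  obtain ⟨j, s, rfl⟩ := zgraph_adj_iff.1 h
  by_cases hij : i = j
  · subst hij
    rcases Int.units_eq_one_or s with rfl | rfl
    · rfl
    · simp at hlt
  · simp [hij] at hlt

/-- Only the arcs crossing the hyperplane `x i = t + 1/2` are lost, and such an arc is determined
by either endpoint. -/
theorem card_innerArcs_le_of_split (C : Finset (Fin d → ℤ)) (i : Fin d) (t : ℤ) :
    #(innerArcs C) ≤ #(innerArcs {x ∈ C | x i ≤ t}) + #(innerArcs {x ∈ C | ¬ x i ≤ t})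
      + 2 * min #{x ∈ C | x i ≤ t} #{x ∈ C | ¬ x i ≤ t} := by
  set C₀ := {x ∈ C | x i ≤ t}
  set C₁ := {x ∈ C | ¬ x i ≤ t}
  set cross := {p ∈ innerArcs C | p.1 i ≤ t ∧ ¬ p.2 i ≤ t}
  have hstep : ∀ p ∈ cross, p.2 = p.1 + Pi.single i 1 := fun p hp => by
    simp only [cross, mem_filter, mem_innerArcs] at hp
    exact eq_add_single_of_adj_of_lt hp.1.2.2 (by omega)
  have hcover : innerArcs C ⊆
      innerArcs C₀ ∪ innerArcs C₁ ∪ (cross ∪ cross.image Prod.swap) := by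
    intro p hp
    obtain ⟨h1, h2, hadj⟩ := mem_innerArcs.1 hp
    simp only [mem_union, mem_image, mem_innerArcs, C₀, C₁, cross, mem_filter]
    by_cases hp1 : p.1 i ≤ t <;> by_cases hp2 : p.2 i ≤ t
    · tauto
    · tauto
    · exact Or.inr (Or.inr ⟨p.swap, ⟨⟨h2, h1, hadj.symm⟩, hp2, hp1⟩, rfl⟩)
    · tauto
  have hcross₀ : #cross ≤ #C₀ := by
    refine card_le_card_of_injOn Prod.fst (fun p hp => ?_) fun p hp q hq hpq => ?_
    · obtain ⟨hin, h1, -⟩ := mem_filter.1 (mem_coe.1 hp)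
      exact mem_filter.2 ⟨(mem_innerArcs.1 hin).1, h1⟩
    · exact Prod.ext hpq (by rw [hstep p hp, hstep q hq, hpq])
  have hcross₁ : #cross ≤ #C₁ := by
    refine card_le_card_of_injOn Prod.snd (fun p hp => ?_) fun p hp q hq hpq => ?_
    · obtain ⟨hin, -, h2⟩ := mem_filter.1 (mem_coe.1 hp)
      exact mem_filter.2 ⟨(mem_innerArcs.1 hin).2.1, h2⟩
    · have h := hstep p hp
      rw [hpq, hstep q hq] at h
      exact Prod.ext (add_right_cancel h).symm hpq
  calc #(innerArcs C)
      ≤ #(innerArcs C₀) + #(innerArcs C₁) + (#cross + #(cross.image Prod.swap)) :=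
        (card_le_card hcover).trans <| (card_union_le _ _).trans <|
          add_le_add (card_union_le _ _) (card_union_le _ _)
    _ ≤ #(innerArcs C₀) + #(innerArcs C₁) + 2 * min #C₀ #C₁ := by
        have := card_image_le (s := cross) (f := Prod.swap)
        have := le_min hcross₀ hcross₁
        omega

/-- Harper's edge-isoperimetric inequality: `C` spans at most `|C| log₂ |C| / 2` edges, each of
which gives two inner arcs. -/
theorem card_innerArcs_mul_log_two_le (C : Finset (Fin d → ℤ)) :
    #(innerArcs C) * log 2 ≤ #C * log #C := by
  induction C using Finset.strongInduction with
  | _ C ih =>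
  by_cases hsmall : #C ≤ 1
  · have hempty : innerArcs C = ∅ := eq_empty_of_forall_notMem fun p hp => by
      obtain ⟨h1, h2, hadj⟩ := mem_innerArcs.1 hp
      exact hadj.ne (card_le_one.1 hsmall _ h1 _ h2)
    rw [hempty, card_empty, Nat.cast_zero, zero_mul]
    exact mul_nonneg (Nat.cast_nonneg _) (log_natCast_nonneg _)
  obtain ⟨x, hx, y, hy, hxy⟩ := one_lt_card.1 (not_le.1 hsmall)
  obtain ⟨i, hi⟩ := Function.ne_iff.1 hxy
  set t := min (x i) (y i)
  set C₀ := {z ∈ C | z i ≤ t}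
  set C₁ := {z ∈ C | ¬ z i ≤ t}
  have hne₀ : C₀.Nonempty := by
    rcases min_choice (x i) (y i) with h | h
    · exact ⟨x, mem_filter.2 ⟨hx, h.ge⟩⟩
    · exact ⟨y, mem_filter.2 ⟨hy, h.ge⟩⟩
  have hne₁ : C₁.Nonempty := by
    rcases lt_or_gt_of_ne hi with h | h
    · exact ⟨y, mem_filter.2 ⟨hy, by simp [t, h.le, h]⟩⟩
    · exact ⟨x, mem_filter.2 ⟨hx, by simp [t, h.le, h]⟩⟩
  have hsub₀ : C₀ ⊂ C := filter_ssubset.2 (by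
    obtain ⟨z, hz⟩ := hne₁
    exact ⟨z, (mem_filter.1 hz).1, (mem_filter.1 hz).2⟩)
  have hsub₁ : C₁ ⊂ C := filter_ssubset.2 (by
    obtain ⟨z, hz⟩ := hne₀
    exact ⟨z, (mem_filter.1 hz).1, not_not.2 (mem_filter.1 hz).2⟩)
  have hcard : (#C : ℝ) = #C₀ + #C₁ := by
    rw [← Nat.cast_add, card_filter_add_card_filter_not]
  have hsplit : (#(innerArcs C) : ℝ) ≤
      #(innerArcs C₀) + #(innerArcs C₁) + 2 * min (#C₀ : ℝ) #C₁ := by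
    exact_mod_cast card_innerArcs_le_of_split C i t
  have hent := mul_log_add_mul_log_add_le (a := #C₀) (b := #C₁)
    (by exact_mod_cast hne₀.card_pos) (by exact_mod_cast hne₁.card_pos)
  rw [hcard]
  nlinarith [ih C₀ hsub₀, ih C₁ hsub₁, mul_le_mul_of_nonneg_right hsplit (log_pos one_lt_two).le]

theorem mul_card_le_card_outerArcs {C : Finset (Fin d → ℤ)} (hC : #C ≤ 2 ^ d) :
    d * #C ≤ #(outerArcs C) := by
  have hlog : log #C ≤ d * log 2 := by
    rcases (#C).eq_zero_or_pos with h0 | h0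
    · rw [h0, Nat.cast_zero, log_zero]; positivity
    · rw [← log_pow]
      exact log_le_log (by exact_mod_cast h0) (by exact_mod_cast hC)
  have hinner : #(innerArcs C) ≤ d * #C := by
    have h : (#(innerArcs C) : ℝ) * log 2 ≤ (d * #C : ℝ) * log 2 := by
      calc (#(innerArcs C) : ℝ) * log 2 ≤ #C * log #C := card_innerArcs_mul_log_two_le C
        _ ≤ #C * (d * log 2) := mul_le_mul_of_nonneg_left hlog (Nat.cast_nonneg _)
        _ = (d * #C : ℝ) * log 2 := by ring
    exact_mod_cast le_of_mul_le_mul_right h (log_pos one_lt_two)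
  linarith [card_innerArcs_add_card_outerArcs C]

end SmallSets

section LargeSets

variable {d : ℕ}

def eraseCoord (i : Fin d) (x : Fin d → ℤ) : Fin d → ℤ := Function.update x i 0

theorem eraseCoord_add_single (i : Fin d) (x : Fin d → ℤ) (a : ℤ) :
    eraseCoord i (x + Pi.single i a) = eraseCoord i x := by
  ext j
  by_cases hj : j = i <;> simp [eraseCoord, hj]

/-- Every line in direction `i` that meets `C` leaves `C` through an arc in direction `s eᵢ`,
starting at the last point of the line in `C`. -/
theorem card_image_eraseCoord_le (C : Finset (Fin d → ℤ)) (i : Fin d) (s : ℤˣ) :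
    #(C.image (eraseCoord i)) ≤ #{p ∈ outerArcs C | p.2 - p.1 = Pi.single i (s : ℤ)} := by
  refine card_le_card_of_surjOn (fun p => eraseCoord i p.1) fun y hy => ?_
  obtain ⟨x, hx, rfl⟩ := mem_image.1 hy
  obtain ⟨z, hz, hmax⟩ := exists_max_image {z ∈ C | eraseCoord i z = eraseCoord i x}
    (fun z => (s : ℤ) * z i) ⟨x, mem_filter.2 ⟨hx, rfl⟩⟩
  obtain ⟨hzC, hzx⟩ := mem_filter.1 hz
  have hnext : z + Pi.single i (s : ℤ) ∉ C := fun hmem => by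
    have h := hmax _ (mem_filter.2 ⟨hmem, by rw [eraseCoord_add_single, hzx]⟩)
    rcases Int.units_eq_one_or s with rfl | rfl <;> simp at h
  refine ⟨(z, z + Pi.single i (s : ℤ)), mem_filter.2 ⟨?_, add_sub_cancel_left _ _⟩, hzx⟩
  exact mem_outerArcs.2 ⟨hzC, hnext, zgraph_adj_iff.2 ⟨i, s, rfl⟩⟩

theorem outerArcs_nonempty (i : Fin d) {C : Finset (Fin d → ℤ)} (hC : C.Nonempty) :
    (outerArcs C).Nonempty := by
  rw [← card_pos]
  exact ((hC.image _).card_pos.trans_le (card_image_eraseCoord_le C i 1)).trans_le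
    (card_filter_le _ _)

theorem two_mul_sum_card_image_eraseCoord_le (C : Finset (Fin d → ℤ)) :
    2 * ∑ i, #(C.image (eraseCoord i)) ≤ #(outerArcs C) := by
  set step : Fin d × ℤˣ → Fin d → ℤ := fun q => Pi.single q.1 (q.2 : ℤ)
  calc 2 * ∑ i, #(C.image (eraseCoord i))
      = ∑ q : Fin d × ℤˣ, #(C.image (eraseCoord q.1)) := by
        rw [Fintype.sum_prod_type, mul_sum]
        simp
    _ ≤ ∑ q : Fin d × ℤˣ, #{p ∈ outerArcs C | p.2 - p.1 = step q} :=
        sum_le_sum fun q _ => card_image_eraseCoord_le C q.1 q.2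
    _ = ∑ δ ∈ univ.image step, #{p ∈ outerArcs C | p.2 - p.1 = δ} := by
        rw [sum_image fun _ _ _ _ h => pi_single_units_injective h]
    _ ≤ #(outerArcs C) := by
        rw [sum_card_fiberwise_eq_card_filter]
        exact card_filter_le _ _

theorem card_image_eval_le_card_image_eraseCoord (C : Finset (Fin d → ℤ)) {i j : Fin d}
    (hij : i ≠ j) : #(C.image (· i)) ≤ #(C.image (eraseCoord j)) := by
  have h : C.image (· i) = (C.image (eraseCoord j)).image (· i) := by
    rw [image_image]
    exact image_congr fun x _ => by simp [eraseCoord, hij]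
  rw [h]
  exact card_image_le

theorem card_le_mul_card_image_eraseCoord (C : Finset (Fin d → ℤ)) {i j : Fin d} (hij : i ≠ j) :
    #C ≤ #(C.image (eraseCoord i)) * #(C.image (eraseCoord j)) := by
  have hinj : Set.InjOn (fun x => (eraseCoord i x, x i)) C := fun x _ y _ h => by
    simp only [Prod.mk.injEq] at h
    calc x = Function.update (eraseCoord i x) i (x i) := by simp [eraseCoord]
      _ = Function.update (eraseCoord i y) i (y i) := by rw [h.1, h.2]
      _ = y := by simp [eraseCoord]
  calc #C ≤ #(C.image (eraseCoord i) ×ˢ C.image (· i)) :=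
        card_le_card_of_injOn _ (fun x hx => mem_product.2
          ⟨mem_image_of_mem _ hx, mem_image_of_mem _ hx⟩) hinj
    _ ≤ #(C.image (eraseCoord i)) * #(C.image (eraseCoord j)) := by
        rw [card_product]
        exact Nat.mul_le_mul_left _ (card_image_eval_le_card_image_eraseCoord C hij)

/-- A weak Loomis–Whitney inequality: `|C| ≤ aᵢ aⱼ` for all `i ≠ j`, summed over such pairs. -/
theorem mul_card_le_sq_sum_card_image_eraseCoord (C : Finset (Fin d → ℤ)) :
    d * (d - 1) * #C ≤ (∑ i, #(C.image (eraseCoord i))) ^ 2 := by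
  set a := fun i => #(C.image (eraseCoord i))
  calc d * (d - 1) * #C = ∑ i : Fin d, ∑ _j ∈ univ.erase i, #C := by
        simp [card_erase_of_mem, mul_assoc]
    _ ≤ ∑ i, ∑ j ∈ univ.erase i, a i * a j :=
        sum_le_sum fun i _ => sum_le_sum fun j hj =>
          card_le_mul_card_image_eraseCoord C (ne_of_mem_erase hj).symm
    _ ≤ ∑ i, ∑ j, a i * a j :=
        sum_le_sum fun i _ => sum_le_sum_of_subset (erase_subset _ _)
    _ = (∑ i, a i) ^ 2 := by rw [sq, sum_mul_sum]

theorem pow_three_le_four_mul_two_pow (hd : 2 ≤ d) : d ^ 3 ≤ 4 * (d - 1) * 2 ^ d := by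
  induction d, hd using Nat.le_induction with
  | base => norm_num
  | succ n hn ih =>
    obtain ⟨m, rfl⟩ : ∃ m, n = m + 2 := ⟨n - 2, by omega⟩
    have hpow : 4 ≤ 2 ^ (m + 2) := by
      calc 4 = 2 ^ 2 := by norm_num
        _ ≤ 2 ^ (m + 2) := Nat.pow_le_pow_right two_pos (by omega)
    rw [show m + 2 - 1 = m + 1 by omega] at ih
    rw [show m + 2 + 1 - 1 = m + 2 by omega, pow_succ 2 (m + 2)]
    nlinarith [Nat.zero_le (m ^ 3), Nat.zero_le m]

theorem sq_le_card_outerArcs {C : Finset (Fin d → ℤ)} (hd : 2 ≤ d) (hC : 2 ^ d ≤ #C) :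
    d ^ 2 ≤ #(outerArcs C) := by
  set σ := ∑ i, #(C.image (eraseCoord i))
  have hσ : d * (d - 1) * #C ≤ σ ^ 2 := mul_card_le_sq_sum_card_image_eraseCoord C
  refine (Nat.pow_le_pow_iff_left two_ne_zero).1 ?_
  calc (d ^ 2) ^ 2 = d * d ^ 3 := by ring
    _ ≤ d * (4 * (d - 1) * 2 ^ d) := Nat.mul_le_mul_left _ (pow_three_le_four_mul_two_pow hd)
    _ ≤ 4 * (d * (d - 1) * #C) := by
        rw [show d * (4 * (d - 1) * 2 ^ d) = 4 * (d * (d - 1) * 2 ^ d) by ring]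
        exact Nat.mul_le_mul_left _ (Nat.mul_le_mul_left _ hC)
    _ ≤ (2 * σ) ^ 2 := by rw [mul_pow]; exact Nat.mul_le_mul_left _ hσ
    _ ≤ #(outerArcs C) ^ 2 := Nat.pow_le_pow_left (two_mul_sum_card_image_eraseCoord_le C) 2

end LargeSets

section Pieces

variable {d : ℕ} {W X S : Set (Fin d → ℤ)}

def ZGraphOff (d : ℕ) (W : Set (Fin d → ℤ)) : SimpleGraph (Fin d → ℤ) where
  Adj u v := (ZGraph d).Adj u v ∧ u ∉ W ∧ v ∉ W
  symm := ⟨fun _ _ ⟨h, hu, hv⟩ => ⟨h.symm, hv, hu⟩⟩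
  loopless := ⟨fun _ ⟨h, _⟩ => h.ne rfl⟩

/-- The finite connected components of `ℤ^d ∖ W`. -/
def pieces (d : ℕ) (W : Set (Fin d → ℤ)) : Set (Finset (Fin d → ℤ)) :=
  {C | Disjoint (C : Set (Fin d → ℤ)) W ∧ ∃ c : (ZGraphOff d W).ConnectedComponent, c.supp = C}

def ClosedOff (W X : Set (Fin d → ℤ)) : Prop :=
  ∀ ⦃u v⦄, (ZGraph d).Adj u v → u ∈ X → v ∉ W → v ∈ X

theorem ClosedOff.compl_diff (hX : ClosedOff W X) : ClosedOff W (Wᶜ \ X) :=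
  fun _ _ huv hu hv => ⟨hv, fun hvX => hu.2 (hX huv.symm hvX hu.1)⟩

theorem closedOff_of_mem_pieces {C : Finset (Fin d → ℤ)} (hC : C ∈ pieces d W) :
    ClosedOff W (C : Set (Fin d → ℤ)) := by
  obtain ⟨hdisj, c, hc⟩ := hC
  intro u v huv hu hv
  have huW : u ∉ W := Set.disjoint_left.1 hdisj hu
  rw [← hc, SimpleGraph.ConnectedComponent.mem_supp_iff] at hu ⊢
  rw [← hu]
  exact SimpleGraph.ConnectedComponent.connectedComponentMk_eq_of_adj ⟨huv.symm, hv, huW⟩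

theorem eq_of_mem_pieces {C C' : Finset (Fin d → ℤ)} (hC : C ∈ pieces d W)
    (hC' : C' ∈ pieces d W) {v : Fin d → ℤ} (hv : v ∈ C) (hv' : v ∈ C') : C = C' := by
  obtain ⟨-, c, hc⟩ := hC
  obtain ⟨-, c', hc'⟩ := hC'
  rw [← mem_coe, ← hc, SimpleGraph.ConnectedComponent.mem_supp_iff] at hv
  rw [← mem_coe, ← hc', SimpleGraph.ConnectedComponent.mem_supp_iff] at hv'
  rw [← coe_inj, ← hc, ← hc', ← hv, ← hv']

theorem snd_mem_of_mem_outerArcs {C : Finset (Fin d → ℤ)} (hC : C ∈ pieces d W)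
    {p : (Fin d → ℤ) × (Fin d → ℤ)} (hp : p ∈ outerArcs C) : p.2 ∈ W := by
  obtain ⟨h1, h2, hadj⟩ := mem_outerArcs.1 hp
  by_contra hW
  exact h2 (closedOff_of_mem_pieces hC hadj h1 hW)

/-- The boundaries of distinct pieces are disjoint and all end in `W`. -/
theorem sum_card_outerArcs_le (hW : W.Finite) {F : Finset (Finset (Fin d → ℤ))}
    (hF : ↑F ⊆ pieces d W) : ∑ C ∈ F, #(outerArcs C) ≤ 2 * d * W.ncard := by
  have hdisj : (F : Set (Finset (Fin d → ℤ))).PairwiseDisjoint outerArcs :=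
    fun C hC C' hC' hne => disjoint_left.2 fun p hp hp' => hne <|
      eq_of_mem_pieces (hF hC) (hF hC') (mem_outerArcs.1 hp).1 (mem_outerArcs.1 hp').1
  have hsub : F.biUnion outerArcs ⊆ (arcs hW.toFinset).image Prod.swap := fun p hp => by
    obtain ⟨C, hC, hp⟩ := mem_biUnion.1 hp
    refine mem_image.2 ⟨p.swap, mem_arcs.2 ⟨?_, (mem_outerArcs.1 hp).2.2.symm⟩, p.swap_swap⟩
    exact hW.mem_toFinset.2 (snd_mem_of_mem_outerArcs (hF hC) hp)
  calc ∑ C ∈ F, #(outerArcs C) = #(F.biUnion outerArcs) := (card_biUnion hdisj).symm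
    _ ≤ #(arcs hW.toFinset) := (card_le_card hsub).trans card_image_le
    _ = 2 * d * W.ncard := by rw [card_arcs, Set.ncard_eq_toFinset_card _ hW]

theorem pieces_finite (hd : 0 < d) (hW : W.Finite) : (pieces d W).Finite := by
  by_contra hinf
  obtain ⟨F, hF, hcard⟩ := Set.Infinite.exists_subset_card_eq hinf (2 * d * W.ncard + 1)
  have hpos : ∀ C ∈ F, 1 ≤ #(outerArcs C) := fun C hC => by
    obtain ⟨-, c, hc⟩ := hF hC
    have hne : C.Nonempty := by rw [← coe_nonempty, ← hc]; exact c.nonempty_supp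
    exact (outerArcs_nonempty ⟨0, hd⟩ hne).card_pos
  have := (card_eq_sum_ones F ▸ sum_le_sum hpos).trans (sum_card_outerArcs_le hW hF)
  omega

theorem Separates.mem_iff_of_reachable (hsep : Separates d W S) {u v : Fin d → ℤ}
    (h : (ZGraphOff d W).Reachable u v) : u ∈ S ↔ v ∈ S := by
  have step : ∀ a b, (ZGraphOff d W).Adj a b → a ∈ S → b ∈ S := fun a b ⟨hab, ha, hb⟩ haS => by
    by_contra hbS
    exact (hsep a b ⟨a, b, hab, haS, hbS, rfl⟩).elim ha hb
  obtain ⟨w⟩ := h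
  induction w with
  | nil => rfl
  | cons hadj _ ih => exact ⟨fun h => ih.1 (step _ _ hadj h), fun h => step _ _ hadj.symm (ih.2 h)⟩

theorem disjoint_supp_connectedComponentMk {v : Fin d → ℤ} (hv : v ∉ W) :
    Disjoint ((ZGraphOff d W).connectedComponentMk v).supp W := by
  refine Set.disjoint_left.2 fun u hu huW => ?_
  obtain ⟨w⟩ := SimpleGraph.ConnectedComponent.exact hu
  cases w with
  | nil => exact hv huW
  | cons h _ => exact h.2.1 huW

theorem exists_mem_pieces_of_separates (hS : S.Finite) (hsep : Separates d W S)
    {v : Fin d → ℤ} (hvS : v ∈ S) (hvW : v ∉ W) :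
    ∃ C ∈ pieces d W, v ∈ C ∧ (C : Set (Fin d → ℤ)) ⊆ S := by
  set c := (ZGraphOff d W).connectedComponentMk v
  have hsub : c.supp ⊆ S := fun u hu =>
    (hsep.mem_iff_of_reachable (SimpleGraph.ConnectedComponent.exact hu)).2 hvS
  have hfin := hS.subset hsub
  refine ⟨hfin.toFinset, ⟨?_, c, hfin.coe_toFinset.symm⟩, hfin.mem_toFinset.2 rfl, ?_⟩
  · rw [hfin.coe_toFinset]
    exact disjoint_supp_connectedComponentMk hvW
  · rwa [hfin.coe_toFinset]

theorem sum_card_le_of_forall_card_lt (hd : 0 < d) (hW : W.Finite)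
    {F : Finset (Finset (Fin d → ℤ))} (hF : ↑F ⊆ pieces d W) (hsmall : ∀ C ∈ F, #C < 2 ^ d) :
    ∑ C ∈ F, #C ≤ 2 * W.ncard := by
  refine Nat.le_of_mul_le_mul_left ?_ hd
  calc d * ∑ C ∈ F, #C = ∑ C ∈ F, d * #C := mul_sum _ _ _
    _ ≤ ∑ C ∈ F, #(outerArcs C) :=
        sum_le_sum fun C hC => mul_card_le_card_outerArcs (hsmall C hC).le
    _ ≤ d * (2 * W.ncard) := by rw [← mul_assoc, mul_comm d]; exact sum_card_outerArcs_le hW hF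

theorem mul_card_le_of_forall_le_card (hd : 2 ≤ d) (hW : W.Finite)
    {F : Finset (Finset (Fin d → ℤ))} (hF : ↑F ⊆ pieces d W) (hbig : ∀ C ∈ F, 2 ^ d ≤ #C) :
    d * #F ≤ 2 * W.ncard := by
  refine Nat.le_of_mul_le_mul_left ?_ (by omega : 0 < d)
  calc d * (d * #F) = ∑ _C ∈ F, d ^ 2 := by rw [sum_const, smul_eq_mul]; ring
    _ ≤ ∑ C ∈ F, #(outerArcs C) := sum_le_sum fun C hC => sq_le_card_outerArcs hd (hbig C hC)
    _ ≤ d * (2 * W.ncard) := by rw [← mul_assoc, mul_comm d]; exact sum_card_outerArcs_le hW hF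

end Pieces

section Approximations

variable {d : ℕ} {W X X' S : Set (Fin d → ℤ)}

def adjoinParity (W : Set (Fin d → ℤ)) (P : (Fin d → ℤ) → Prop) (X : Set (Fin d → ℤ)) :
    Set (Fin d → ℤ) :=
  X ∪ {w | w ∈ W ∧ P w ∧ ∃ v ∈ X, ¬ P v ∧ (ZGraph d).Adj w v}

theorem ClosedOff.forall_intBdry_adjoinParity {P : (Fin d → ℤ) → Prop}
    (hP : ∀ u v, (ZGraph d).Adj u v → ¬ P u → P v) (hX : ClosedOff W X) :
    ∀ u ∈ intBdry d (adjoinParity W P X), P u := by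
  rintro u ⟨huX | ⟨-, hPu, -⟩, v, huv, hv⟩
  · by_contra hPu
    by_cases hvW : v ∈ W
    · exact hv (Or.inr ⟨hvW, hP u v huv hPu, u, huX, hPu, huv.symm⟩)
    · exact hv (Or.inl (hX huv huX hvW))
  · exact hPu

theorem adjoinParity_subset {P : (Fin d → ℤ) → Prop} (hS : ∀ u ∈ intBdry d S, P u)
    (hXS : X ⊆ S) : adjoinParity W P X ⊆ S := by
  rintro w (hw | ⟨-, -, v, hv, hPv, hwv⟩)
  · exact hXS hw
  · by_contra hwS
    exact hPv (hS v ⟨hXS hv, w, hwv.symm, hwS⟩)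

theorem IsOddSet.isEvenSet_compl (hS : IsOddSet d S) : IsEvenSet d Sᶜ := by
  rintro u ⟨huS, v, huv, hvS⟩
  rw [Set.notMem_compl_iff] at hvS
  have hodd := hS v ⟨hvS, u, huv.symm, huS⟩
  exact (evenVert_iff_oddVert_of_adj huv.symm).2 hodd

/-- The vertices of `W` put into `A•` and `A∘` are forced: an odd set contains every neighbour of
its even vertices, and its complement every neighbour of its odd ones. -/
def Approx.ofClosedOff (W : Set (Fin d → ℤ)) (hXW : X ⊆ Wᶜ) (hXX' : X ⊆ X')
    (hX : ClosedOff W X) (hX' : ClosedOff W X') : Approx d where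
  inn := adjoinParity W OddVert X
  out := adjoinParity W EvenVert (Wᶜ \ X')
  disj := by
    rw [Set.disjoint_left]
    rintro v (hvX | ⟨hvW, hodd, -⟩) (hvY | ⟨hvW', heven, -⟩)
    · exact hvY.2 (hXX' hvX)
    · exact hXW hvX hvW'
    · exact hvY.1 hvW
    · exact Int.not_even_iff_odd.2 hodd heven
  inn_odd := hX.forall_intBdry_adjoinParity fun u v huv hu =>
    (oddVert_iff_not_oddVert_of_adj huv).2 hu
  out_even := hX'.compl_diff.forall_intBdry_adjoinParity fun u v huv hu =>
    (evenVert_iff_oddVert_of_adj huv).2 (Int.not_even_iff_odd.1 hu)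

theorem Approx.star_ofClosedOff_subset (hXW : X ⊆ Wᶜ) (hXX' : X ⊆ X') (hX : ClosedOff W X)
    (hX' : ClosedOff W X') : (Approx.ofClosedOff W hXW hXX' hX hX').star ⊆ W ∪ (X' \ X) := by
  intro v hv
  simp only [Approx.star, Approx.ofClosedOff, adjoinParity, Set.mem_compl_iff, Set.mem_union,
    not_or] at hv
  by_contra h
  simp only [Set.mem_union, Set.mem_sdiff, not_or, not_and, not_not] at h
  exact hv.2.1 ⟨h.1, fun hvX' => hv.1.1 (h.2 hvX')⟩

theorem Approx.approximates_ofClosedOff (hXW : X ⊆ Wᶜ) (hXX' : X ⊆ X') (hX : ClosedOff W X)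
    (hX' : ClosedOff W X') (hS : IsOddSet d S) (hXS : X ⊆ S) (hX'S : Wᶜ \ X' ⊆ Sᶜ) :
    Approximates (Approx.ofClosedOff W hXW hXX' hX hX') S :=
  ⟨adjoinParity_subset hS hXS, adjoinParity_subset hS.isEvenSet_compl hX'S⟩

def pieceUnion (d : ℕ) (W : Set (Fin d → ℤ)) (𝒦 : Set (Finset (Fin d → ℤ))) :
    Set (Fin d → ℤ) :=
  ⋃ C ∈ 𝒦 ∩ pieces d W, (C : Set (Fin d → ℤ))

theorem pieceUnion_subset_compl (𝒦 : Set (Finset (Fin d → ℤ))) : pieceUnion d W 𝒦 ⊆ Wᶜ :=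
  Set.iUnion₂_subset fun _ hC => Set.disjoint_left.1 hC.2.1

theorem pieceUnion_mono {𝒦 𝒦' : Set (Finset (Fin d → ℤ))} (h : 𝒦 ⊆ 𝒦') :
    pieceUnion d W 𝒦 ⊆ pieceUnion d W 𝒦' :=
  Set.biUnion_subset_biUnion_left (Set.inter_subset_inter_left _ h)

theorem closedOff_pieceUnion (𝒦 : Set (Finset (Fin d → ℤ))) :
    ClosedOff W (pieceUnion d W 𝒦) := by
  intro u v huv hu hv
  obtain ⟨C, hC, huC⟩ := Set.mem_iUnion₂.1 hu
  exact Set.mem_iUnion₂.2 ⟨C, hC, closedOff_of_mem_pieces hC.2 huv huC hv⟩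

/-- Pieces in `𝒦` go inside; the infinite components and the pieces outside `𝒮 ∪ 𝒦` go outside. -/
def pieceApprox (d : ℕ) (W : Set (Fin d → ℤ)) (𝒮 𝒦 : Set (Finset (Fin d → ℤ))) : Approx d :=
  Approx.ofClosedOff W (pieceUnion_subset_compl 𝒦) (pieceUnion_mono Set.subset_union_right)
    (closedOff_pieceUnion 𝒦) (closedOff_pieceUnion (𝒮 ∪ 𝒦))

theorem star_pieceApprox_finite_and_ncard_le (hW : W.Finite) (F : Finset (Finset (Fin d → ℤ)))
    (𝒦 : Set (Finset (Fin d → ℤ))) :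
    (pieceApprox d W ↑F 𝒦).star.Finite ∧
      (pieceApprox d W ↑F 𝒦).star.ncard ≤ W.ncard + ∑ C ∈ F, #C := by
  have hsub : (pieceApprox d W ↑F 𝒦).star ⊆ W ∪ ↑(F.biUnion id) := by
    refine (Approx.star_ofClosedOff_subset _ _ _ _).trans (Set.union_subset_union_right _ ?_)
    rintro v ⟨hv, hv'⟩
    obtain ⟨C, ⟨hC | hC, hCp⟩, hvC⟩ := Set.mem_iUnion₂.1 hv
    · exact mem_coe.2 (mem_biUnion.2 ⟨C, hC, hvC⟩)
    · exact (hv' (Set.mem_iUnion₂.2 ⟨C, ⟨hC, hCp⟩, hvC⟩)).elim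
  have hfin : (W ∪ ↑(F.biUnion id)).Finite := hW.union (finite_toSet _)
  refine ⟨hfin.subset hsub, (Set.ncard_le_ncard hsub hfin).trans ?_⟩
  calc (W ∪ ↑(F.biUnion id)).ncard ≤ W.ncard + #(F.biUnion id) := by
        rw [← Set.ncard_coe_finset]; exact Set.ncard_union_le _ _
    _ ≤ W.ncard + ∑ C ∈ F, #C := Nat.add_le_add_left card_biUnion_le _

theorem approximates_pieceApprox (hS : S.Finite) (hodd : IsOddSet d S) (hsep : Separates d W S)
    {𝒮 𝒦 : Set (Finset (Fin d → ℤ))} (h𝒦 : ∀ C ∈ 𝒦, (C : Set (Fin d → ℤ)) ⊆ S)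
    (hcover : ∀ C ∈ pieces d W, (C : Set (Fin d → ℤ)) ⊆ S → C ∈ 𝒮 ∪ 𝒦) :
    Approximates (pieceApprox d W 𝒮 𝒦) S := by
  refine Approx.approximates_ofClosedOff _ _ _ _ hodd
    (Set.iUnion₂_subset fun C hC => h𝒦 C hC.1) fun v ⟨hvW, hvX'⟩ hvS => hvX' ?_
  obtain ⟨C, hC, hvC, hCS⟩ := exists_mem_pieces_of_separates hS hsep hvS hvW
  exact Set.mem_iUnion₂.2 ⟨C, ⟨hcover C hC hCS, hC⟩, hvC⟩

end Approximations

theorem two_pow_le_four_rpow {d b w : ℕ} (hd : 0 < d) (h : d * b ≤ 2 * w) :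
    (2 : ℝ) ^ b ≤ (4 : ℝ) ^ ((w : ℝ) / d) := by
  have hexp : (b : ℝ) / 2 ≤ w / d := by
    rw [div_le_div_iff₀ two_pos (by exact_mod_cast hd)]
    exact_mod_cast (by linarith : b * d ≤ w * 2)
  calc (2 : ℝ) ^ b = (4 : ℝ) ^ ((b : ℝ) / 2) := by
        rw [show (4 : ℝ) = 2 ^ (2 : ℝ) by norm_num, ← Real.rpow_mul two_pos.le,
          mul_div_cancel₀ _ two_ne_zero, Real.rpow_natCast]
    _ ≤ (4 : ℝ) ^ ((w : ℝ) / d) := Real.rpow_le_rpow_of_exponent_le (by norm_num) hexp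

theorem separating_set_to_small_approximations_general (d : ℕ) (hd : 2 ≤ d) (n : ℕ)
    (W : Set (Fin d → ℤ)) (hW : W.Finite) :
    ∃ 𝒜 : Set (Approx d), 𝒜.Finite ∧
      (∀ A ∈ 𝒜, A.star.Finite ∧ A.star.ncard ≤ 3 * W.ncard) ∧
      (𝒜.ncard : ℝ) ≤ (4 : ℝ) ^ ((W.ncard : ℝ) / d) ∧
      ∀ S : Set (Fin d → ℤ), S.Finite → IsRegularSet d S → IsOddSet d S →
        (edgeBdry d S).ncard = n → Separates d W S → ∃ A ∈ 𝒜, Approximates A S := by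
  classical
  have hfin := pieces_finite (by omega) hW
  set small := {C ∈ hfin.toFinset | #C < 2 ^ d}
  set big := {C ∈ hfin.toFinset | 2 ^ d ≤ #C}
  have hpieces {F} (hF : F ⊆ hfin.toFinset) : ↑F ⊆ pieces d W :=
    fun C hC => hfin.mem_toFinset.1 (hF hC)
  have hsmall : ∑ C ∈ small, #C ≤ 2 * W.ncard :=
    sum_card_le_of_forall_card_lt (by omega) hW (hpieces (filter_subset _ _))
      fun C hC => (mem_filter.1 hC).2
  have hbig : d * #big ≤ 2 * W.ncard :=
    mul_card_le_of_forall_le_card hd hW (hpieces (filter_subset _ _))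
      fun C hC => (mem_filter.1 hC).2
  set approxOf := fun κ : Finset (Finset (Fin d → ℤ)) => pieceApprox d W ↑small ↑κ
  refine ⟨↑(big.powerset.image approxOf), finite_toSet _, ?_, ?_, ?_⟩
  · simp only [coe_image, Set.forall_mem_image]
    intro κ _
    obtain ⟨hstar, hcard⟩ := star_pieceApprox_finite_and_ncard_le hW small ↑κ
    exact ⟨hstar, hcard.trans (by omega)⟩
  · rw [Set.ncard_coe_finset]
    have hcard : #(big.powerset.image approxOf) ≤ 2 ^ #big :=
      card_image_le.trans (card_powerset big).le
    refine le_trans ?_ (two_pow_le_four_rpow (by omega) hbig)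
    exact_mod_cast hcard
  · intro S hS _ hodd _ hsep
    refine ⟨_, mem_image_of_mem _ (mem_powerset.2 (filter_subset (fun C => ↑C ⊆ S) big)), ?_⟩
    refine approximates_pieceApprox hS hodd hsep (fun C hC => (mem_filter.1 hC).2)
      fun C hC hCS => (lt_or_ge #C (2 ^ d)).imp (fun h => mem_filter.2 ⟨hfin.mem_toFinset.2 hC, h⟩)
        fun h => mem_filter.2 ⟨mem_filter.2 ⟨hfin.mem_toFinset.2 hC, h⟩, hCS⟩

/-- For any `n ≥ 1` and finite `W ⊆ ℤ^d`, there is a family `𝒜` of approximations, each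
of size at most `3|W|`, with `|𝒜| ≤ 4^{|W|/d}`, approximating every finite regular odd
set `S` with `|∂S| = n` which is separated by `W`. -/
theorem separating_set_to_small_approximations (d : ℕ) (hd : 2 ≤ d) (n : ℕ) (hn : 1 ≤ n)
    (W : Set (Fin d → ℤ)) (hW : W.Finite) :
    ∃ 𝒜 : Set (Approx d), 𝒜.Finite ∧
      (∀ A ∈ 𝒜, A.star.Finite ∧ A.star.ncard ≤ 3 * W.ncard) ∧
      (𝒜.ncard : ℝ) ≤ (4 : ℝ) ^ ((W.ncard : ℝ) / d) ∧
      ∀ S : Set (Fin d → ℤ), S.Finite → IsRegularSet d S → IsOddSet d S →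
        (edgeBdry d S).ncard = n → Separates d W S → ∃ A ∈ 𝒜, Approximates A S :=
  separating_set_to_small_approximations_general d hd n W hW
end

section
/- Fix d ≥ 2. For every approximation A there exists an approximation B such that the collection of finite regular odd sets approximated by A equals the collection of finite regular odd sets approximated by B, B* ⊆ A*, and B* contains no isolated vertices (every vertex of B* has a neighbor in B*). -/
/-!
An unknown vertex `v` of `A` all of whose neighbours are known has the same fate in every regular
odd set `S` approximated by `A`. If `v` is odd and has a neighbour `u ∈ A•`, then `v ∈ S`, for
otherwise the even vertex `u` would lie on the internal boundary of `S`; if `v` is even and all its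
neighbours lie in `A•`, then `v ∈ S`, for otherwise `v` would be isolated in `Sᶜ`. Dually `v ∉ S` in
the two remaining cases. Adding these vertices to `A•` or `A∘` preserves the parity conditions, and
an unknown vertex that survives has an unknown neighbour, which cannot have been removed either.
-/

lemma oddVert_iff_evenVert_of_adj {d : ℕ} {u v : Fin d → ℤ} (h : (ZGraph d).Adj u v) :
    OddVert u ↔ EvenVert v := by
  have hmod : ∑ i, (u i - v i) ≡ ∑ i, ((u i - v i).natAbs : ℤ) [ZMOD 2] :=
    Int.ModEq.sum fun i _ => Int.ModEq.symm <| Int.modEq_iff_dvd.2 <|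
      even_iff_two_dvd.1 <| Int.even_sub.2 (by simp [even_abs])
  have hone : ∑ i, ((u i - v i).natAbs : ℤ) = 1 := by exact_mod_cast h
  rw [hone, Finset.sum_sub_distrib] at hmod
  exact Int.odd_sub.1 (Int.odd_iff.2 hmod)

lemma not_evenVert_of_oddVert {d : ℕ} {v : Fin d → ℤ} (h : OddVert v) : ¬ EvenVert v :=
  Int.not_even_iff_odd.2 h

namespace Approx

variable {d : ℕ} (A : Approx d)

lemma notMem_star {v : Fin d → ℤ} : v ∉ A.star ↔ v ∈ A.inn ∨ v ∈ A.out := not_not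

def isolatedStar : Set (Fin d → ℤ) :=
  {v ∈ A.star | ∀ u, (ZGraph d).Adj v u → u ∉ A.star}

def forcedIn : Set (Fin d → ℤ) :=
  {v ∈ A.isolatedStar | (OddVert v ∧ ∃ u, (ZGraph d).Adj v u ∧ u ∈ A.inn) ∨
    (EvenVert v ∧ ∀ u, (ZGraph d).Adj v u → u ∈ A.inn)}

def forcedOut : Set (Fin d → ℤ) :=
  {v ∈ A.isolatedStar | (EvenVert v ∧ ∃ u, (ZGraph d).Adj v u ∧ u ∈ A.out) ∨
    (OddVert v ∧ ∀ u, (ZGraph d).Adj v u → u ∈ A.out)}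

lemma forcedIn_union_forcedOut : A.forcedIn ∪ A.forcedOut = A.isolatedStar := by
  refine Set.Subset.antisymm (Set.union_subset (fun _ hv => hv.1) (fun _ hv => hv.1)) ?_
  intro v hv
  have known : ∀ u, (ZGraph d).Adj v u → u ∈ A.inn ∨ u ∈ A.out :=
    fun u hvu => A.notMem_star.1 (hv.2 u hvu)
  rcases Int.even_or_odd (∑ i, v i) with hev | hodd
  · by_cases hall : ∀ u, (ZGraph d).Adj v u → u ∈ A.inn
    · exact Or.inl ⟨hv, Or.inr ⟨hev, hall⟩⟩
    · push Not at hall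
      obtain ⟨u, hvu, hu⟩ := hall
      exact Or.inr ⟨hv, Or.inl ⟨hev, u, hvu, (known u hvu).resolve_left hu⟩⟩
  · by_cases hex : ∃ u, (ZGraph d).Adj v u ∧ u ∈ A.inn
    · exact Or.inl ⟨hv, Or.inl ⟨hodd, hex⟩⟩
    · push Not at hex
      exact Or.inr ⟨hv, Or.inr ⟨hodd, fun u hvu => (known u hvu).resolve_left (hex u hvu)⟩⟩

lemma disjoint_forcedIn_forcedOut : Disjoint A.forcedIn A.forcedOut := by
  rw [Set.disjoint_left]
  rintro v ⟨-, ⟨hodd, u, hvu, hu⟩ | ⟨hev, hall⟩⟩ ⟨-, ⟨hev', w, hvw, hw⟩ | ⟨hodd', hall'⟩⟩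
  · exact not_evenVert_of_oddVert hodd hev'
  · exact Set.disjoint_left.1 A.disj hu (hall' u hvu)
  · exact Set.disjoint_left.1 A.disj (hall w hvw) hw
  · exact not_evenVert_of_oddVert hodd' hev

lemma disjoint_inn_union_forcedIn_out_union_forcedOut :
    Disjoint (A.inn ∪ A.forcedIn) (A.out ∪ A.forcedOut) := by
  rw [Set.disjoint_left]
  rintro v (hv | hv) (hv' | hv')
  · exact Set.disjoint_left.1 A.disj hv hv'
  · exact hv'.1.1 (Or.inl hv)
  · exact hv.1.1 (Or.inr hv')
  · exact Set.disjoint_left.1 A.disjoint_forcedIn_forcedOut hv hv'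

lemma isOddSet_inn_union_forcedIn : IsOddSet d (A.inn ∪ A.forcedIn) := by
  rintro v ⟨hv | ⟨-, ⟨hodd, -⟩ | ⟨-, hall⟩⟩, w, hvw, hw⟩
  · exact A.inn_odd v ⟨hv, w, hvw, fun h => hw (Or.inl h)⟩
  · exact hodd
  · exact absurd (Or.inl (hall w hvw)) hw

lemma isEvenSet_out_union_forcedOut : IsEvenSet d (A.out ∪ A.forcedOut) := by
  rintro v ⟨hv | ⟨-, ⟨hev, -⟩ | ⟨-, hall⟩⟩, w, hvw, hw⟩
  · exact A.out_even v ⟨hv, w, hvw, fun h => hw (Or.inl h)⟩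
  · exact hev
  · exact absurd (Or.inl (hall w hvw)) hw

def fillIsolated : Approx d where
  inn := A.inn ∪ A.forcedIn
  out := A.out ∪ A.forcedOut
  disj := A.disjoint_inn_union_forcedIn_out_union_forcedOut
  inn_odd := A.isOddSet_inn_union_forcedIn
  out_even := A.isEvenSet_out_union_forcedOut

lemma star_fillIsolated : A.fillIsolated.star = A.star \ A.isolatedStar := by
  rw [Approx.star, fillIsolated, Set.union_union_union_comm, forcedIn_union_forcedOut,
    Set.compl_union, Set.sdiff_eq, Approx.star]

lemma exists_adj_mem_star_fillIsolated {v : Fin d → ℤ} (hv : v ∈ A.fillIsolated.star) :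
    ∃ u ∈ A.fillIsolated.star, (ZGraph d).Adj v u := by
  rw [star_fillIsolated] at hv ⊢
  obtain ⟨hvA, hviso⟩ := hv
  obtain ⟨u, hvu, hu⟩ : ∃ u, (ZGraph d).Adj v u ∧ u ∈ A.star := by
    by_contra! h
    exact hviso ⟨hvA, h⟩
  exact ⟨u, ⟨hu, fun hiso => hiso.2 v hvu.symm hvA⟩, hvu⟩

variable {A} {S : Set (Fin d → ℤ)}

lemma forcedIn_subset (hreg : IsRegularSet d S) (hodd : IsOddSet d S) (hA : Approximates A S) :
    A.forcedIn ⊆ S := by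
  rintro v ⟨-, ⟨hv, u, hvu, hu⟩ | ⟨-, hall⟩⟩ <;> by_contra hvS
  · exact not_evenVert_of_oddVert (hodd u ⟨hA.1 hu, v, hvu.symm, hvS⟩)
      ((oddVert_iff_evenVert_of_adj hvu).1 hv)
  · obtain ⟨w, hw, hvw⟩ := hreg.2 v hvS
    exact hw (hA.1 (hall w hvw))

lemma forcedOut_subset_compl (hreg : IsRegularSet d S) (hodd : IsOddSet d S)
    (hA : Approximates A S) : A.forcedOut ⊆ Sᶜ := by
  rintro v ⟨-, ⟨hv, u, hvu, hu⟩ | ⟨-, hall⟩⟩ hvS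
  · exact not_evenVert_of_oddVert (hodd v ⟨hvS, u, hvu, hA.2 hu⟩) hv
  · obtain ⟨w, hw, hvw⟩ := hreg.1 v hvS
    exact hA.2 (hall w hvw) hw

lemma approximates_fillIsolated_iff (hreg : IsRegularSet d S) (hodd : IsOddSet d S) :
    Approximates A.fillIsolated S ↔ Approximates A S :=
  ⟨fun h => ⟨Set.subset_union_left.trans h.1, Set.subset_union_left.trans h.2⟩,
    fun h => ⟨Set.union_subset h.1 (forcedIn_subset hreg hodd h),
      Set.union_subset h.2 (forcedOut_subset_compl hreg hodd h)⟩⟩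

end Approx

theorem eliminate_isolated_unknown_vertices_general (d : ℕ) (A : Approx d) :
    ∃ B : Approx d,
      {S : Set (Fin d → ℤ) | S.Finite ∧ IsRegularSet d S ∧ IsOddSet d S ∧ Approximates A S} =
        {S : Set (Fin d → ℤ) | S.Finite ∧ IsRegularSet d S ∧ IsOddSet d S ∧ Approximates B S} ∧
      B.star ⊆ A.star ∧ ∀ v ∈ B.star, ∃ u ∈ B.star, (ZGraph d).Adj v u := by
  refine ⟨A.fillIsolated, ?_, A.star_fillIsolated ▸ Set.sdiff_subset,
    fun _ hv => A.exists_adj_mem_star_fillIsolated hv⟩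
  ext S
  exact and_congr_right fun _ => and_congr_right fun hreg => and_congr_right fun hodd =>
    (Approx.approximates_fillIsolated_iff hreg hodd).symm

/-- Every approximation `A` can be replaced by an approximation `B` with the same
collection of finite regular odd sets approximated, `B* ⊆ A*`, and no isolated vertices
in `B*`. -/
theorem eliminate_isolated_unknown_vertices (d : ℕ) (hd : 2 ≤ d) (A : Approx d) :
    ∃ B : Approx d,
      {S : Set (Fin d → ℤ) | S.Finite ∧ IsRegularSet d S ∧ IsOddSet d S ∧ Approximates A S} =
        {S : Set (Fin d → ℤ) | S.Finite ∧ IsRegularSet d S ∧ IsOddSet d S ∧ Approximates B S} ∧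
      B.star ⊆ A.star ∧ ∀ v ∈ B.star, ∃ u ∈ B.star, (ZGraph d).Adj v u :=
  eliminate_isolated_unknown_vertices_general d A
end
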